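/- Consider the IU^{γ*} marginals A^n_i and B^n_i built on a probability space. Then for every i ∈ {1,…,n}: (i) P(A^n_i = 0) = P(a_i = 0) and P(B^n_i = 0) = P(b_i = 0); (ii) P(A^n_i = x) = 0 for every x ∈ (0,∞) with x ≠ X_A, and P(B^n_i = y) = 0 for every y ∈ (0,∞) with y ≠ X_B; (iii) under Assumption (A0), there exists a constant D ∈ (0,1) depending only on w̲, w̄, X_A, X_B such that P(A^n_i = X_A) ≤ D^{n−1} and P(B^n_i = X_B) ≤ D^{n−1}. -/

import Mathlib

open Finset MeasureTheory

/-- Normalized battlefield values: `nv w i = w i / ∑_j w j`. -/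
noncomputable def nv {n : ℕ} (w : Fin n → ℝ) (i : Fin n) : ℝ := w i / ∑ j, w j

/-- The set `Ω_A(γ) = {i : v^A_i / v^B_i > γ}`. -/
noncomputable def OmegaA {n : ℕ} (wA wB : Fin n → ℝ) (γ : ℝ) : Finset (Fin n) :=
  Finset.univ.filter fun i => γ < nv wA i / nv wB i

/-- Equation (2). -/
def Eq2 {n : ℕ} (XA XB : ℝ) (wA wB : Fin n → ℝ) (γ : ℝ) : Prop :=
  XB * γ / XA =
    (γ ^ 2 * ∑ i ∈ OmegaA wA wB γ, (nv wB i) ^ 2 / nv wA i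
        + ∑ i ∈ (OmegaA wA wB γ)ᶜ, nv wA i) /
    (∑ i ∈ OmegaA wA wB γ, nv wB i
        + (γ ^ 2)⁻¹ * ∑ i ∈ (OmegaA wA wB γ)ᶜ, (nv wA i) ^ 2 / nv wB i)

/-- The multiplier λ*_A associated with a solution γ of Equation (2). -/
noncomputable def lamA {n : ℕ} (XB : ℝ) (wA wB : Fin n → ℝ) (γ : ℝ) : ℝ :=
  γ ^ 2 / (2 * XB) * ∑ i ∈ OmegaA wA wB γ, (nv wB i) ^ 2 / nv wA i
    + 1 / (2 * XB) * ∑ i ∈ (OmegaA wA wB γ)ᶜ, nv wA i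

/-- The multiplier λ*_B associated with a solution γ of Equation (2). -/
noncomputable def lamB {n : ℕ} (XA : ℝ) (wA wB : Fin n → ℝ) (γ : ℝ) : ℝ :=
  1 / (2 * XA) * ∑ i ∈ OmegaA wA wB γ, nv wB i
    + 1 / (2 * γ ^ 2 * XA) * ∑ i ∈ (OmegaA wA wB γ)ᶜ, (nv wA i) ^ 2 / nv wB i

/-- The uniform-type CDF `F_{A*_i}`. -/
noncomputable def FAstar {n : ℕ} (XA XB : ℝ) (wA wB : Fin n → ℝ) (γ : ℝ) (i : Fin n)
    (x : ℝ) : ℝ :=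
  if x < 0 then 0
  else if i ∈ OmegaA wA wB γ then
    min (x * lamB XA wA wB γ / nv wB i) 1
  else
    min (1 - nv wA i * lamB XA wA wB γ / (nv wB i * lamA XB wA wB γ)
          + x * lamB XA wA wB γ / nv wB i) 1

/-- The uniform-type CDF `F_{B*_i}`. -/
noncomputable def FBstar {n : ℕ} (XA XB : ℝ) (wA wB : Fin n → ℝ) (γ : ℝ) (i : Fin n)
    (x : ℝ) : ℝ :=
  if x < 0 then 0
  else if i ∈ OmegaA wA wB γ then
    min (1 - nv wB i * lamA XB wA wB γ / (nv wA i * lamB XA wA wB γ)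
          + x * lamA XB wA wB γ / nv wA i) 1
  else
    min (x * lamA XB wA wB γ / nv wA i) 1

/-- The IU^γ* allocation to battlefield `i`: the draw `a i` normalized by the total
draw and scaled by the budget `X` (and `0` if the total draw is `0`). -/
noncomputable def IUalloc {n : ℕ} {Ω : Type*} (X : ℝ) (a : Fin n → Ω → ℝ)
    (i : Fin n) (ω : Ω) : ℝ :=
  if 0 < ∑ j, a j ω then a i ω * X / ∑ j, a j ω else 0


/-!
Parts (i) and (ii) only use that the draws are independent, almost surely nonnegative and
without atoms in `(0, ∞)`: their CDFs vanish on the negatives and are continuous on the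
positives. An interior value `0 < x < X_A` of `A^n_i` forces
`a_i = x / (X_A - x) · Σ_{j ≠ i} a_j` with a positive sum, an event of probability zero
since `a_i` is independent of that sum.

For (iii), `A^n_i = X_A` forces `a_j = 0` for every `j ≠ i`, so by independence its
probability is at most the product of the atoms `F_{A*_j}(0)`. Equation (2) says
`λ*_A = γ* λ*_B`. Under (A0) every ratio `v^A_j / v^B_j` lies in `[ρ, 1/ρ]` with
`ρ = (w̲/w̄)²`, and comparing the sums that define `λ*_A` and `λ*_B` term by term confines
`γ*` to `[ρ X_B / X_A, X_B / (ρ X_A)]`. Hence every atom at zero, `1 - v^A_j / (v^B_j γ*)`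
or `1 - v^B_j γ* / v^A_j`, is at most `1 - ρ² X_A / X_B`.
-/

open ProbabilityTheory

section Probability

variable {Ω : Type*} [MeasurableSpace Ω] {P : Measure Ω}
  {X : Ω → ℝ} {G : ℝ → ℝ}

lemma measure_eq_le_ofReal (hG : ∀ x, P {ω | X ω ≤ x} = ENNReal.ofReal (G x)) (x : ℝ) :
    P {ω | X ω = x} ≤ ENNReal.ofReal (G x) :=
  (measure_mono fun _ h ↦ le_of_eq h).trans_eq (hG x)

lemma cdf_map_eq_max [IsProbabilityMeasure P] (hX : Measurable X)
    (hG : ∀ x, P {ω | X ω ≤ x} = ENNReal.ofReal (G x)) (x : ℝ) :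
    cdf (P.map X) x = max (G x) 0 := by
  have := Measure.isProbabilityMeasure_map (μ := P) hX.aemeasurable
  rw [cdf_eq_real, measureReal_def, Measure.map_apply hX measurableSet_Iic]
  exact (congrArg ENNReal.toReal (hG x)).trans ENNReal.toReal_ofReal'

lemma measure_eq_zero_of_continuousAt [IsProbabilityMeasure P] (hX : Measurable X)
    (hG : ∀ x, P {ω | X ω ≤ x} = ENNReal.ofReal (G x)) {t : ℝ} (ht : ContinuousAt G t) :
    P {ω | X ω = t} = 0 := by
  have := Measure.isProbabilityMeasure_map (μ := P) hX.aemeasurable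
  have hcont : ContinuousAt (cdf (P.map X)) t := by
    rw [show ⇑(cdf (P.map X)) = fun x ↦ max (G x) 0 from funext (cdf_map_eq_max hX hG)]
    exact ht.max continuousAt_const
  have hleft : Function.leftLim (cdf (P.map X)) t = cdf (P.map X) t :=
    hcont.continuousWithinAt.leftLim_eq
  calc P {ω | X ω = t} = P.map X {t} := (Measure.map_apply hX (measurableSet_singleton t)).symm
    _ = 0 := by rw [← measure_cdf (P.map X), StieltjesFunction.measure_singleton, hleft,
      sub_self, ENNReal.ofReal_zero]

lemma ae_nonneg_of_cdf_eq_zero [IsProbabilityMeasure P] (hX : Measurable X)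
    (hG : ∀ x, P {ω | X ω ≤ x} = ENNReal.ofReal (G x)) (hneg : ∀ x < 0, G x = 0) :
    ∀ᵐ ω ∂P, 0 ≤ X ω := by
  have := Measure.isProbabilityMeasure_map (μ := P) hX.aemeasurable
  have hleft : Function.leftLim (cdf (P.map X)) 0 = 0 := by
    refine leftLim_eq_of_tendsto (tendsto_const_nhds.congr' ?_)
    filter_upwards [self_mem_nhdsWithin] with x hx
    rw [cdf_map_eq_max hX hG, hneg x hx, max_self]
  have hIio : P.map X (Set.Iio 0) = 0 := by
    rw [← measure_cdf (P.map X), StieltjesFunction.measure_Iio _ (tendsto_cdf_atBot _), hleft,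
      sub_self, ENNReal.ofReal_zero]
  rw [Measure.map_apply hX measurableSet_Iio] at hIio
  exact ae_iff.2 (by simp only [not_le]; exact hIio)

end Probability

lemma ProbabilityTheory.IndepFun.measure_eq_comp_and_mem_eq_zero {Ω : Type*} [MeasurableSpace Ω]
    {P : Measure Ω} [IsFiniteMeasure P] {X Y : Ω → ℝ} (hX : Measurable X)
    (hY : Measurable Y) (hind : IndepFun Y X P) {g : ℝ → ℝ} (hg : Measurable g)
    {s : Set ℝ} (hs : MeasurableSet s) (hatom : ∀ y ∈ s, P {ω | X ω = g y} = 0) :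
    P {ω | X ω = g (Y ω) ∧ Y ω ∈ s} = 0 := by
  set T : Set (ℝ × ℝ) := {p | p.2 = g p.1 ∧ p.1 ∈ s}
  have hT : MeasurableSet T :=
    (measurableSet_eq_fun measurable_snd (hg.comp measurable_fst)).inter (measurable_fst hs)
  have hslice : ∀ y, P.map X (Prod.mk y ⁻¹' T) = 0 := by
    intro y
    by_cases hy : y ∈ s
    · refine measure_mono_null (t := {g y}) (fun x hx ↦ hx.1) ?_
      rw [Measure.map_apply hX (measurableSet_singleton _)]
      exact hatom y hy
    · exact measure_mono_null (fun x hx ↦ (hy hx.2).elim) measure_empty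
  change P ((fun ω ↦ (Y ω, X ω)) ⁻¹' T) = 0
  rw [← Measure.map_apply (hY.prodMk hX) hT,
    (indepFun_iff_map_prod_eq_prod_map_map hY.aemeasurable hX.aemeasurable).1 hind,
    Measure.measure_prod_null hT]
  exact Filter.Eventually.of_forall hslice

section IUalloc

variable {n : ℕ} {Ω : Type*} {X : ℝ} {f : Fin n → Ω → ℝ} {i : Fin n} {ω : Ω}

lemma IUalloc_eq_zero_iff (hX : X ≠ 0) (hf : ∀ j, 0 ≤ f j ω) :
    IUalloc X f i ω = 0 ↔ f i ω = 0 := by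
  have hle : f i ω ≤ ∑ j, f j ω := single_le_sum (fun j _ ↦ hf j) (mem_univ i)
  unfold IUalloc
  split_ifs with hS
  · simp [hX, hS.ne']
  · exact ⟨fun _ ↦ le_antisymm (hle.trans (not_lt.1 hS)) (hf i), fun _ ↦ rfl⟩

lemma IUalloc_le (hX : 0 ≤ X) (hf : ∀ j, 0 ≤ f j ω) : IUalloc X f i ω ≤ X := by
  unfold IUalloc
  split_ifs with hS
  · rw [div_le_iff₀ hS, mul_comm]
    exact mul_le_mul_of_nonneg_left (single_le_sum (fun j _ ↦ hf j) (mem_univ i)) hX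
  · exact hX

lemma eq_zero_of_IUalloc_eq_self (hX : X ≠ 0) (hf : ∀ j, 0 ≤ f j ω)
    (h : IUalloc X f i ω = X) : ∀ j ∈ univ.erase i, f j ω = 0 := by
  unfold IUalloc at h
  split_ifs at h with hS
  · rw [div_eq_iff hS.ne'] at h
    have hfi : f i ω = ∑ j, f j ω := mul_left_cancel₀ hX (by linear_combination h)
    have hrest : ∑ j ∈ univ.erase i, f j ω = 0 := by
      linarith [add_sum_erase _ (fun j ↦ f j ω) (mem_univ i)]
    exact (sum_eq_zero_iff_of_nonneg fun j _ ↦ hf j).1 hrest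
  · exact absurd h.symm hX

lemma eq_mul_sum_erase_of_IUalloc_eq {x : ℝ} (hx : 0 < x) (hxX : x < X)
    (hf : ∀ j, 0 ≤ f j ω) (h : IUalloc X f i ω = x) :
    f i ω = x / (X - x) * ∑ j ∈ univ.erase i, f j ω ∧
      0 < ∑ j ∈ univ.erase i, f j ω := by
  have hsum := add_sum_erase _ (fun j ↦ f j ω) (mem_univ i)
  unfold IUalloc at h
  split_ifs at h with hS
  · rw [div_eq_iff hS.ne'] at h
    have hfi : f i ω = x / (X - x) * ∑ j ∈ univ.erase i, f j ω := by
      rw [div_mul_eq_mul_div, eq_div_iff (by linarith)]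
      linear_combination h - x * hsum
    refine ⟨hfi, lt_of_le_of_ne (sum_nonneg fun j _ ↦ hf j) fun hrest ↦ ?_⟩
    rw [← hrest, mul_zero] at hfi
    rw [← hsum, hfi, ← hrest, add_zero] at hS
    exact lt_irrefl 0 hS
  · exact absurd h.symm hx.ne'

end IUalloc

section IUallocMeasure

variable {Ω : Type*} [MeasurableSpace Ω] {P : Measure Ω} {n : ℕ}
  {X : ℝ} {f : Fin n → Ω → ℝ}

lemma measure_IUalloc_eq_zero (hX : X ≠ 0) (hf : ∀ᵐ ω ∂P, ∀ j, 0 ≤ f j ω)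
    (i : Fin n) :
    P {ω | IUalloc X f i ω = 0} = P {ω | f i ω = 0} := by
  refine measure_congr (Filter.eventuallyEq_set.2 ?_)
  filter_upwards [hf] with ω hω
  exact IUalloc_eq_zero_iff hX hω

lemma measure_IUalloc_eq_of_ne [IsFiniteMeasure P] (hX : 0 < X) (hfm : ∀ j, Measurable (f j))
    (hind : iIndepFun f P) (hf : ∀ᵐ ω ∂P, ∀ j, 0 ≤ f j ω) {i : Fin n}
    (hatom : ∀ t > 0, P {ω | f i ω = t} = 0) {x : ℝ} (hx : 0 < x) (hxX : x ≠ X) :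
    P {ω | IUalloc X f i ω = x} = 0 := by
  rcases hxX.lt_or_gt with hlt | hgt
  · set S : Ω → ℝ := fun ω ↦ ∑ j ∈ univ.erase i, f j ω
    have hS : Measurable S := Finset.measurable_sum _ fun j _ ↦ hfm j
    have hindS : IndepFun S (f i) P := by
      simpa only [S, ← Finset.sum_apply] using
        hind.indepFun_finsetSum_of_notMem hfm (notMem_erase i univ)
    refine measure_mono_null_ae ?_ (hindS.measure_eq_comp_and_mem_eq_zero (hfm i) hS
      (measurable_const_mul (x / (X - x))) measurableSet_Ioi fun y hy ↦
        hatom _ (mul_pos (div_pos hx (sub_pos.2 hlt)) hy))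
    filter_upwards [hf] with ω hω h
    exact eq_mul_sum_erase_of_IUalloc_eq hx hlt hω h
  · refine measure_eq_zero_iff_ae_notMem.2 ?_
    filter_upwards [hf] with ω hω h
    exact (IUalloc_le hX.le hω).not_gt (h.symm ▸ hgt)

lemma measure_IUalloc_eq_self_le (hX : X ≠ 0) (hind : iIndepFun f P)
    (hf : ∀ᵐ ω ∂P, ∀ j, 0 ≤ f j ω) (i : Fin n) {δ : ENNReal}
    (hδ : ∀ j, P {ω | f j ω = 0} ≤ δ) :
    P {ω | IUalloc X f i ω = X} ≤ δ ^ (n - 1) := by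
  calc P {ω | IUalloc X f i ω = X}
      ≤ P (⋂ j ∈ univ.erase i, {ω | f j ω = 0}) := by
        refine measure_mono_ae ?_
        filter_upwards [hf] with ω hω h
        exact Set.mem_iInter₂.2 (eq_zero_of_IUalloc_eq_self hX hω h)
    _ = ∏ j ∈ univ.erase i, P {ω | f j ω = 0} :=
        hind.meas_biInter fun j _ ↦ ⟨{0}, measurableSet_singleton 0, rfl⟩
    _ ≤ δ ^ (univ.erase i).card := prod_le_pow_card _ _ _ fun j _ ↦ hδ j
    _ = δ ^ (n - 1) := by rw [card_erase_of_mem (mem_univ i), card_univ, Fintype.card_fin]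

end IUallocMeasure

section EquilibriumCDF

open Topology

variable {n : ℕ} {XA XB γ : ℝ} {wA wB : Fin n → ℝ} {i : Fin n}

lemma FAstar_of_neg {x : ℝ} (hx : x < 0) : FAstar XA XB wA wB γ i x = 0 := if_pos hx

lemma FBstar_of_neg {x : ℝ} (hx : x < 0) : FBstar XA XB wA wB γ i x = 0 := if_pos hx

lemma FAstar_continuousAt {t : ℝ} (ht : 0 < t) : ContinuousAt (FAstar XA XB wA wB γ i) t := by
  have hloc : (fun x ↦ if i ∈ OmegaA wA wB γ then min (x * lamB XA wA wB γ / nv wB i) 1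
      else min (1 - nv wA i * lamB XA wA wB γ / (nv wB i * lamA XB wA wB γ)
        + x * lamB XA wA wB γ / nv wB i) 1) =ᶠ[𝓝 t] FAstar XA XB wA wB γ i := by
    filter_upwards [lt_mem_nhds ht] with x hx
    simp only [FAstar, if_neg (not_lt.2 hx.le)]
  refine ContinuousAt.congr ?_ hloc
  split_ifs <;> fun_prop

lemma FBstar_continuousAt {t : ℝ} (ht : 0 < t) : ContinuousAt (FBstar XA XB wA wB γ i) t := by
  have hloc : (fun x ↦ if i ∈ OmegaA wA wB γ then
      min (1 - nv wB i * lamA XB wA wB γ / (nv wA i * lamB XA wA wB γ)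
        + x * lamA XB wA wB γ / nv wA i) 1
      else min (x * lamA XB wA wB γ / nv wA i) 1) =ᶠ[𝓝 t] FBstar XA XB wA wB γ i := by
    filter_upwards [lt_mem_nhds ht] with x hx
    simp only [FBstar, if_neg (not_lt.2 hx.le)]
  refine ContinuousAt.congr ?_ hloc
  split_ifs <;> fun_prop

end EquilibriumCDF

section Equilibrium

variable {n : ℕ} {XA XB γ : ℝ} {wA wB : Fin n → ℝ}

lemma nv_nonneg {w : Fin n → ℝ} (hw : ∀ j, 0 ≤ w j) (i : Fin n) : 0 ≤ nv w i :=
  div_nonneg (hw i) (sum_nonneg fun j _ ↦ hw j)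

lemma nv_pos {w : Fin n → ℝ} (hw : ∀ j, 0 < w j) (i : Fin n) : 0 < nv w i :=
  div_pos (hw i) (sum_pos (fun j _ ↦ hw j) ⟨i, mem_univ i⟩)

lemma two_mul_lamA (hXB : XB ≠ 0) :
    2 * XB * lamA XB wA wB γ = γ ^ 2 * ∑ i ∈ OmegaA wA wB γ, (nv wB i) ^ 2 / nv wA i
      + ∑ i ∈ (OmegaA wA wB γ)ᶜ, nv wA i := by
  unfold lamA
  field_simp

lemma two_mul_lamB (hXA : XA ≠ 0) :
    2 * XA * lamB XA wA wB γ = ∑ i ∈ OmegaA wA wB γ, nv wB i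
      + (γ ^ 2)⁻¹ * ∑ i ∈ (OmegaA wA wB γ)ᶜ, (nv wA i) ^ 2 / nv wB i := by
  unfold lamB
  field_simp

lemma lamB_nonneg (hXA : 0 ≤ XA) (hwB : ∀ j, 0 ≤ wB j) :
    0 ≤ lamB XA wA wB γ :=
  add_nonneg (mul_nonneg (by positivity) (sum_nonneg fun j _ ↦ nv_nonneg hwB j))
    (mul_nonneg (by positivity) (sum_nonneg fun j _ ↦
      div_nonneg (sq_nonneg _) (nv_nonneg hwB j)))

lemma lamB_ne_zero_of_eq2 (hXA : 0 < XA) (hXB : 0 < XB) (hγ : 0 < γ)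
    (h : Eq2 XA XB wA wB γ) : lamB XA wA wB γ ≠ 0 := by
  -- with `λ*_B = 0` the right side of Equation (2) is a division by zero, hence `0`
  intro h0
  rw [Eq2, ← two_mul_lamA hXB.ne', ← two_mul_lamB hXA.ne', h0, mul_zero, div_zero] at h
  exact (div_pos (mul_pos hXB hγ) hXA).ne' h

lemma lamA_eq_mul_lamB_of_eq2 (hXA : 0 < XA) (hXB : 0 < XB) (hγ : 0 < γ)
    (h : Eq2 XA XB wA wB γ) : lamA XB wA wB γ = γ * lamB XA wA wB γ := by
  have hB := lamB_ne_zero_of_eq2 hXA hXB hγ h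
  rw [Eq2, ← two_mul_lamA hXB.ne', ← two_mul_lamB hXA.ne',
    div_eq_div_iff hXA.ne' (by positivity)] at h
  have hXAB : 2 * XA * XB ≠ 0 := by positivity
  exact mul_left_cancel₀ hXAB (by linear_combination -h)

lemma mul_le_sq_div_of_mul_le {ρ u v : ℝ} (hu : 0 < u) (hv : 0 ≤ v) (h : ρ * u ≤ v) :
    ρ * v ≤ v ^ 2 / u := by
  rw [le_div_iff₀ hu]
  nlinarith [mul_le_mul_of_nonneg_left h hv]

lemma mul_sq_div_le_of_mul_le {ρ u v : ℝ} (hu : 0 ≤ u) (hv : 0 < v) (h : ρ * u ≤ v) :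
    ρ * (u ^ 2 / v) ≤ u := by
  rw [mul_div_assoc', div_le_iff₀ hv]
  nlinarith [mul_le_mul_of_nonneg_left h hu]

lemma mul_lamB_le_lamA (hXA : XA ≠ 0) (hXB : XB ≠ 0) (hγ : γ ≠ 0)
    (hwA : ∀ j, 0 < wA j) (hwB : ∀ j, 0 < wB j) {ρ : ℝ}
    (hρ : ∀ j, ρ * nv wA j ≤ nv wB j) :
    ρ * (XA * γ ^ 2 * lamB XA wA wB γ) ≤ XB * lamA XB wA wB γ := by
  have h1 : ρ * ∑ i ∈ OmegaA wA wB γ, nv wB i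
      ≤ ∑ i ∈ OmegaA wA wB γ, (nv wB i) ^ 2 / nv wA i := by
    rw [mul_sum]
    exact sum_le_sum fun j _ ↦
      mul_le_sq_div_of_mul_le (nv_pos hwA j) (nv_pos hwB j).le (hρ j)
  have h2 : ρ * ∑ i ∈ (OmegaA wA wB γ)ᶜ, (nv wA i) ^ 2 / nv wB i
      ≤ ∑ i ∈ (OmegaA wA wB γ)ᶜ, nv wA i := by
    rw [mul_sum]
    exact sum_le_sum fun j _ ↦
      mul_sq_div_le_of_mul_le (nv_pos hwA j).le (nv_pos hwB j) (hρ j)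
  have hB := two_mul_lamB (wA := wA) (wB := wB) (γ := γ) hXA
  have hA := two_mul_lamA (wA := wA) (wB := wB) (γ := γ) hXB
  field_simp at hB
  linear_combination (ρ / 2) * hB - hA / 2 + (γ ^ 2 / 2) * h1 + h2 / 2

lemma mul_lamA_le_lamB (hXA : XA ≠ 0) (hXB : XB ≠ 0) (hγ : γ ≠ 0)
    (hwA : ∀ j, 0 < wA j) (hwB : ∀ j, 0 < wB j) {ρ : ℝ}
    (hρ : ∀ j, ρ * nv wB j ≤ nv wA j) :
    ρ * (XB * lamA XB wA wB γ) ≤ XA * γ ^ 2 * lamB XA wA wB γ := by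
  have h1 : ρ * ∑ i ∈ OmegaA wA wB γ, (nv wB i) ^ 2 / nv wA i
      ≤ ∑ i ∈ OmegaA wA wB γ, nv wB i := by
    rw [mul_sum]
    exact sum_le_sum fun j _ ↦
      mul_sq_div_le_of_mul_le (nv_pos hwB j).le (nv_pos hwA j) (hρ j)
  have h2 : ρ * ∑ i ∈ (OmegaA wA wB γ)ᶜ, nv wA i
      ≤ ∑ i ∈ (OmegaA wA wB γ)ᶜ, (nv wA i) ^ 2 / nv wB i := by
    rw [mul_sum]
    exact sum_le_sum fun j _ ↦
      mul_le_sq_div_of_mul_le (nv_pos hwB j) (nv_pos hwA j).le (hρ j)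
  have hB := two_mul_lamB (wA := wA) (wB := wB) (γ := γ) hXA
  have hA := two_mul_lamA (wA := wA) (wB := wB) (γ := γ) hXB
  field_simp at hB
  linear_combination (ρ / 2) * hA - hB / 2 + (γ ^ 2 / 2) * h1 + h2 / 2

end Equilibrium

section Bounded

variable {n : ℕ} {wlo whi : ℝ}

lemma div_mul_le_nv {w : Fin n → ℝ} (hwlo : 0 < wlo) (hw : ∀ j, wlo ≤ w j ∧ w j ≤ whi)
    (i : Fin n) : wlo / (n * whi) ≤ nv w i := by
  have hsum : ∑ j, w j ≤ n * whi := by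
    simpa using sum_le_card_nsmul univ w whi fun j _ ↦ (hw j).2
  exact div_le_div₀ (hwlo.le.trans (hw i).1) (hw i).1
    (sum_pos (fun j _ ↦ hwlo.trans_le (hw j).1) ⟨i, mem_univ i⟩) hsum

lemma nv_le_div_mul {w : Fin n → ℝ} (hwlo : 0 < wlo) (hw : ∀ j, wlo ≤ w j ∧ w j ≤ whi)
    (i : Fin n) : nv w i ≤ whi / (n * wlo) := by
  have hsum : n * wlo ≤ ∑ j, w j := by
    simpa using card_nsmul_le_sum univ w wlo fun j _ ↦ (hw j).1
  have hn : (0 : ℝ) < n := Nat.cast_pos.2 (Fin.pos i)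
  exact div_le_div₀ (hwlo.le.trans ((hw i).1.trans (hw i).2)) (hw i).2 (by positivity) hsum

lemma mul_nv_le_nv {w w' : Fin n → ℝ} (hwlo : 0 < wlo) (hw : ∀ j, wlo ≤ w j ∧ w j ≤ whi)
    (hw' : ∀ j, wlo ≤ w' j ∧ w' j ≤ whi) (i : Fin n) :
    (wlo / whi) ^ 2 * nv w' i ≤ nv w i := by
  have hwhi : 0 < whi := hwlo.trans_le ((hw i).1.trans (hw i).2)
  have hn : (0 : ℝ) < n := Nat.cast_pos.2 (Fin.pos i)
  calc (wlo / whi) ^ 2 * nv w' i ≤ (wlo / whi) ^ 2 * (whi / (n * wlo)) :=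
        mul_le_mul_of_nonneg_left (nv_le_div_mul hwlo hw' i) (sq_nonneg _)
    _ = wlo / (n * whi) := by field_simp
    _ ≤ nv w i := div_mul_le_nv hwlo hw i

end Bounded

section AtomAtZero

variable {n : ℕ} {XA XB γ κ : ℝ} {wA wB : Fin n → ℝ} {i : Fin n}

lemma FAstar_zero_le (hκ : κ ≤ 1) (hvB : 0 < nv wB i) (hγ : 0 < γ)
    (hlam : lamA XB wA wB γ = γ * lamB XA wA wB γ) (hB : lamB XA wA wB γ ≠ 0)
    (h : κ * (nv wB i * γ) ≤ nv wA i) : FAstar XA XB wA wB γ i 0 ≤ 1 - κ := by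
  unfold FAstar
  rw [if_neg (lt_irrefl 0)]
  split_ifs
  · simpa using hκ
  · refine (min_le_left _ _).trans ?_
    have hratio : nv wA i * lamB XA wA wB γ / (nv wB i * lamA XB wA wB γ)
        = nv wA i / (nv wB i * γ) := by
      rw [hlam]
      field_simp
    rw [hratio, zero_mul, zero_div, add_zero, sub_le_sub_iff_left, le_div_iff₀ (by positivity)]
    exact h

lemma FBstar_zero_le (hκ : κ ≤ 1) (hvA : 0 < nv wA i)
    (hlam : lamA XB wA wB γ = γ * lamB XA wA wB γ) (hB : lamB XA wA wB γ ≠ 0)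
    (h : κ * nv wA i ≤ nv wB i * γ) : FBstar XA XB wA wB γ i 0 ≤ 1 - κ := by
  unfold FBstar
  rw [if_neg (lt_irrefl 0)]
  split_ifs
  · refine (min_le_left _ _).trans ?_
    have hratio : nv wB i * lamA XB wA wB γ / (nv wA i * lamB XA wA wB γ)
        = nv wB i * γ / nv wA i := by
      rw [hlam]
      field_simp
    rw [hratio, zero_mul, zero_div, add_zero, sub_le_sub_iff_left, le_div_iff₀ hvA]
    exact h
  · simpa using hκ

end AtomAtZero

section Bounds

variable {n : ℕ} {wlo whi XA XB γ : ℝ} {wA wB : Fin n → ℝ}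

lemma Eq2.gamma_bounds (hXA : 0 < XA) (hXB : 0 < XB) (hγ : 0 < γ) (heq : Eq2 XA XB wA wB γ)
    (hwA : ∀ j, 0 < wA j) (hwB : ∀ j, 0 < wB j) {ρ : ℝ}
    (hρA : ∀ j, ρ * nv wB j ≤ nv wA j) (hρB : ∀ j, ρ * nv wA j ≤ nv wB j) :
    ρ * XA * γ ≤ XB ∧ ρ * XB ≤ XA * γ := by
  have hlamB : 0 < γ * lamB XA wA wB γ := mul_pos hγ <|
    (lamB_nonneg hXA.le fun j ↦ (hwB j).le).lt_of_ne (lamB_ne_zero_of_eq2 hXA hXB hγ heq).symm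
  have hlam := lamA_eq_mul_lamB_of_eq2 hXA hXB hγ heq
  have hup := mul_lamB_le_lamA hXA.ne' hXB.ne' hγ.ne' hwA hwB hρB
  have hlo := mul_lamA_le_lamB hXA.ne' hXB.ne' hγ.ne' hwA hwB hρA
  rw [hlam] at hup hlo
  constructor
  · exact le_of_mul_le_mul_right (by linear_combination hup) hlamB
  · exact le_of_mul_le_mul_right (by linear_combination hlo) hlamB

lemma Eq2.FAstar_zero_le_and_FBstar_zero_le (hwlo : 0 < wlo) (hXA : 0 < XA) (hXAB : XA ≤ XB)
    (hγ : 0 < γ) (heq : Eq2 XA XB wA wB γ) (hbA : ∀ j, wlo ≤ wA j ∧ wA j ≤ whi)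
    (hbB : ∀ j, wlo ≤ wB j ∧ wB j ≤ whi) (j : Fin n) :
    FAstar XA XB wA wB γ j 0 ≤ 1 - (wlo / whi) ^ 4 * XA / XB ∧
      FBstar XA XB wA wB γ j 0 ≤ 1 - (wlo / whi) ^ 4 * XA / XB := by
  set ρ := (wlo / whi) ^ 2
  have hwA : ∀ j, 0 < wA j := fun j ↦ hwlo.trans_le (hbA j).1
  have hwB : ∀ j, 0 < wB j := fun j ↦ hwlo.trans_le (hbB j).1
  have hwhi : 0 < whi := hwlo.trans_le ((hbA j).1.trans (hbA j).2)
  have hXB : 0 < XB := hXA.trans_le hXAB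
  have hρ : 0 < ρ := by positivity
  have hρ1 : ρ ≤ 1 :=
    pow_le_one₀ (by positivity) ((div_le_one hwhi).2 ((hbA j).1.trans (hbA j).2))
  have hρA : ∀ j, ρ * nv wB j ≤ nv wA j := mul_nv_le_nv hwlo hbA hbB
  have hρB : ∀ j, ρ * nv wA j ≤ nv wB j := mul_nv_le_nv hwlo hbB hbA
  obtain ⟨hup, hlo⟩ := heq.gamma_bounds hXA hXB hγ hwA hwB hρA hρB
  have hκ : (wlo / whi) ^ 4 * XA / XB = ρ * (ρ * XA / XB) := by ring
  have hκ1 : ρ * (ρ * XA / XB) ≤ 1 := mul_le_one₀ hρ1 (by positivity)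
    ((div_le_one hXB).2 (by nlinarith))
  have hlam := lamA_eq_mul_lamB_of_eq2 hXA hXB hγ heq
  have hB := lamB_ne_zero_of_eq2 hXA hXB hγ heq
  have hvA := nv_pos hwA j
  have hvB := nv_pos hwB j
  rw [hκ]
  constructor
  · refine FAstar_zero_le hκ1 hvB hγ hlam hB ?_
    have : ρ * XA * γ / XB ≤ 1 := (div_le_one hXB).2 hup
    calc ρ * (ρ * XA / XB) * (nv wB j * γ) = ρ * nv wB j * (ρ * XA * γ / XB) := by ring
      _ ≤ ρ * nv wB j * 1 := mul_le_mul_of_nonneg_left this (by positivity)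
      _ ≤ nv wA j := by linarith [hρA j]
  · refine FBstar_zero_le hκ1 hvA hlam hB ?_
    have : ρ * XA / XB ≤ γ := (div_le_iff₀ hXB).2 (by nlinarith)
    calc ρ * (ρ * XA / XB) * nv wA j = ρ * nv wA j * (ρ * XA / XB) := by ring
      _ ≤ nv wB j * γ := mul_le_mul (hρB j) this (by positivity) hvB.le

end Bounds

/-- Properties of the IU^γ* marginals A^n_i and B^n_i. -/
theorem stmt9 (wlo whi XA XB : ℝ) (hwlo : 0 < wlo) (hw : wlo ≤ whi)
    (hXA : 0 < XA) (hXAB : XA ≤ XB) :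
    ∃ D : ℝ, 0 < D ∧ D < 1 ∧
      ∀ (n : ℕ), 1 ≤ n → ∀ (wA wB : Fin n → ℝ),
        (∀ i, 0 < wA i) → (∀ i, 0 < wB i) →
        ∀ γ : ℝ, 0 < γ → Eq2 XA XB wA wB γ →
        ∀ (Ω : Type) (_ : MeasurableSpace Ω) (P : Measure Ω), IsProbabilityMeasure P →
        ∀ (a b : Fin n → Ω → ℝ),
          (∀ i, Measurable (a i)) → (∀ i, Measurable (b i)) →
          ProbabilityTheory.iIndepFun (Sum.elim a b) P →
          (∀ i x, P {ω | a i ω ≤ x} = ENNReal.ofReal (FAstar XA XB wA wB γ i x)) →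
          (∀ i x, P {ω | b i ω ≤ x} = ENNReal.ofReal (FBstar XA XB wA wB γ i x)) →
        ∀ i : Fin n,
          (P {ω | IUalloc XA a i ω = 0} = P {ω | a i ω = 0} ∧
            P {ω | IUalloc XB b i ω = 0} = P {ω | b i ω = 0}) ∧
          ((∀ x : ℝ, 0 < x → x ≠ XA → P {ω | IUalloc XA a i ω = x} = 0) ∧
            (∀ y : ℝ, 0 < y → y ≠ XB → P {ω | IUalloc XB b i ω = y} = 0)) ∧
          ((∀ j, wlo ≤ wA j ∧ wA j ≤ whi) → (∀ j, wlo ≤ wB j ∧ wB j ≤ whi) →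
            P {ω | IUalloc XA a i ω = XA} ≤ ENNReal.ofReal (D ^ (n - 1)) ∧
            P {ω | IUalloc XB b i ω = XB} ≤ ENNReal.ofReal (D ^ (n - 1))) := by
  set κ := (wlo / whi) ^ 4 * XA / XB
  have hwhi : 0 < whi := hwlo.trans_le hw
  have hXB : 0 < XB := hXA.trans_le hXAB
  have hκ0 : 0 < κ := by positivity
  have hκ1 : κ ≤ 1 := calc
    κ = (wlo / whi) ^ 4 * (XA / XB) := mul_div_assoc _ _ _
    _ ≤ 1 := mul_le_one₀ (pow_le_one₀ (by positivity) ((div_le_one hwhi).2 hw))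
      (by positivity) ((div_le_one hXB).2 hXAB)
  refine ⟨1 - κ / 2, by linarith, by linarith, ?_⟩
  intro n _ wA wB _ _ γ hγ heq Ω _ P _ a b ha hb hind hFa hFb i
  have hindA : iIndepFun a P := hind.precomp (g := Sum.inl) Sum.inl_injective
  have hindB : iIndepFun b P := hind.precomp (g := Sum.inr) Sum.inr_injective
  have hA0 : ∀ᵐ ω ∂P, ∀ j, 0 ≤ a j ω :=
    ae_all_iff.2 fun j ↦ ae_nonneg_of_cdf_eq_zero (ha j) (hFa j) fun _ ↦ FAstar_of_neg
  have hB0 : ∀ᵐ ω ∂P, ∀ j, 0 ≤ b j ω :=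
    ae_all_iff.2 fun j ↦ ae_nonneg_of_cdf_eq_zero (hb j) (hFb j) fun _ ↦ FBstar_of_neg
  have hAatom : ∀ j, ∀ t > 0, P {ω | a j ω = t} = 0 := fun j _ ht ↦
    measure_eq_zero_of_continuousAt (ha j) (hFa j) (FAstar_continuousAt ht)
  have hBatom : ∀ j, ∀ t > 0, P {ω | b j ω = t} = 0 := fun j _ ht ↦
    measure_eq_zero_of_continuousAt (hb j) (hFb j) (FBstar_continuousAt ht)
  refine ⟨⟨measure_IUalloc_eq_zero hXA.ne' hA0 i, measure_IUalloc_eq_zero hXB.ne' hB0 i⟩,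
    ⟨fun _ ↦ measure_IUalloc_eq_of_ne hXA ha hindA hA0 (hAatom i),
      fun _ ↦ measure_IUalloc_eq_of_ne hXB hb hindB hB0 (hBatom i)⟩, fun hbA hbB ↦ ?_⟩
  have hzero := heq.FAstar_zero_le_and_FBstar_zero_le hwlo hXA hXAB hγ hbA hbB
  rw [ENNReal.ofReal_pow (by linarith)]
  exact ⟨measure_IUalloc_eq_self_le hXA.ne' hindA hA0 i fun j ↦
      (measure_eq_le_ofReal (hFa j) 0).trans (ENNReal.ofReal_le_ofReal (by linarith [hzero j])),
    measure_IUalloc_eq_self_le hXB.ne' hindB hB0 i fun j ↦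
      (measure_eq_le_ofReal (hFb j) 0).trans (ENNReal.ofReal_le_ofReal (by linarith [hzero j]))⟩
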